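/- Let X, Y, Z be discrete random variables with finite support on a common probability space, with probability mass functions p_X, p_Y, p_Z. If X ⊥⊥ Z, X ≤ι (Y, Z), X ⊥⊥ Y, and p_Y majorizes p_X, then: X and Y are each uniformly distributed with the same cardinality, Y ⊥⊥ Z, and Y ≤ι (X, Z). -/

import Mathlib

namespace Paper

/-- The probability of an event under a probability mass function. -/
noncomputable def pr {Ω : Type} (μ : PMF Ω) (E : Set Ω) : ENNReal :=
  μ.toOuterMeasure E

/-- Conditional independence `X ⊥⊥ Y | Z`:
`p(x,y,z) p(z) = p(x,z) p(y,z)` for all `x, y, z`. -/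
def CondIndep {Ω α β γ : Type} (μ : PMF Ω) (X : Ω → α) (Y : Ω → β) (Z : Ω → γ) : Prop :=
  ∀ (x : α) (y : β) (z : γ),
    pr μ {ω | X ω = x ∧ Y ω = y ∧ Z ω = z} * pr μ {ω | Z ω = z}
      = pr μ {ω | X ω = x ∧ Z ω = z} * pr μ {ω | Y ω = y ∧ Z ω = z}

/-- Unconditional independence `X ⊥⊥ Y`. -/
def Indep {Ω α β : Type} (μ : PMF Ω) (X : Ω → α) (Y : Ω → β) : Prop :=
  ∀ (x : α) (y : β),
    pr μ {ω | X ω = x ∧ Y ω = y} = pr μ {ω | X ω = x} * pr μ {ω | Y ω = y}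

/-- `X ≥ι Y`: `X` functionally determines `Y` (with probability one). -/
def FunDep {Ω α β : Type} (μ : PMF Ω) (X : Ω → α) (Y : Ω → β) : Prop :=
  ∃ f : α → β, ∀ ω ∈ μ.support, Y ω = f (X ω)

/-- `X =ι Y`: informational equivalence. -/
def InfoEq {Ω α β : Type} (μ : PMF Ω) (X : Ω → α) (Y : Ω → β) : Prop :=
  FunDep μ X Y ∧ FunDep μ Y X

/-- The random variable `X` has finite support. -/
def FinSupp {Ω α : Type} (μ : PMF Ω) (X : Ω → α) : Prop :=
  (X '' μ.support).Finite

/-- The random variable `X` has support of cardinality at most `ℓ`. -/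
def CardLE {Ω α : Type} (μ : PMF Ω) (X : Ω → α) (ℓ : ℕ) : Prop :=
  ∃ s : Finset α, s.card ≤ ℓ ∧ ∀ ω ∈ μ.support, X ω ∈ s

/-- `X` is uniformly distributed with support of cardinality `ℓ`. -/
def UniformCard {Ω α : Type} (μ : PMF Ω) (X : Ω → α) (ℓ : ℕ) : Prop :=
  ∃ S : Finset α, S.card = ℓ ∧ (∀ x ∈ S, pr μ {ω | X ω = x} = (ℓ : ENNReal)⁻¹) ∧
    ∀ x, x ∉ S → pr μ {ω | X ω = x} = 0

/-- The probability mass function of the random variable `X`. -/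
noncomputable def distOf {Ω α : Type} (μ : PMF Ω) (X : Ω → α) : α → ENNReal :=
  fun x => pr μ {ω | X ω = x}

/-- `p ⪰ q` : `p` majorizes `q`, i.e. for every `k`, the sum of the `k` largest values
of `p` is at least the sum of the `k` largest values of `q`. -/
def Majorizes (p q : ℕ → ENNReal) : Prop :=
  ∀ s : Finset ℕ, ∃ t : Finset ℕ, t.card ≤ s.card ∧ ∑ x ∈ s, q x ≤ ∑ x ∈ t, p x

/-- `T` is a sufficient statistic of `X` for `U`: `X ≥ι T` and `U ⊥⊥ X | T`. -/
def SuffStat {Ω α β γ : Type} (μ : PMF Ω) (X : Ω → α) (U : Ω → β) (T : Ω → γ) : Prop :=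
  FunDep μ X T ∧ CondIndep μ U X T

/-- `T` is a minimal sufficient statistic of `X` for `U`. -/
def MinSuffStat {Ω α β γ : Type} (μ : PMF Ω) (X : Ω → α) (U : Ω → β) (T : Ω → γ) : Prop :=
  SuffStat μ X U T ∧
    ∀ (δ : Type) (T' : Ω → δ), SuffStat μ X U T' → FunDep μ T' T

/-- Mutual independence of the subfamily `(V i)_{i ∈ s}`: each `V i` (for `i ∈ s`) is
independent of the joint variable of the others. -/
def MutIndepOn {Ω ι : Type} {β : ι → Type} (μ : PMF Ω) (V : ∀ i, Ω → β i)
    (s : Finset ι) : Prop :=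
  ∀ i ∈ s, Indep μ (V i) (fun ω => fun j : {j // j ∈ s ∧ j ≠ i} => V j.1 ω)

/-- Mutual independence of the whole family `(V i)_i`. -/
def MutIndep {Ω ι : Type} {β : ι → Type} (μ : PMF Ω) (V : ∀ i, Ω → β i) : Prop :=
  ∀ i, Indep μ (V i) (fun ω => fun j : {j // j ≠ i} => V j.1 ω)

/-- Mutual independence of `(V i)_{i ∈ C}` for a list `C` of indices. -/
def MutIndepL {Ω : Type} (μ : PMF Ω) (V : ℕ → Ω → ℕ) (C : List ℕ) : Prop :=
  ∀ i ∈ C, Indep μ (V i) (fun ω => fun j : {j // j ∈ C ∧ j ≠ i} => V j.1 ω)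

/-- The joint random variable `(X a)_{a ∈ A}` for a list `A` of indices. -/
def jointOn {Ω : Type} (X : ℕ → Ω → ℕ) (A : List ℕ) : Ω → ({a : ℕ // a ∈ A} → ℕ) :=
  fun ω a => X a.1 ω

/-- The joint random variable `(T i)_{i ∈ S}` for a finset `S` of indices. -/
def jointFin {Ω ι : Type} {β : ι → Type} (T : ∀ i, Ω → β i) (S : Finset ι) :
    Ω → ((i : {i // i ∈ S}) → β i.1) :=
  fun ω i => T i.1 ω

/-- The set of parents (in-neighbours) of `w` in the directed graph with edge relation `E`. -/
def parentSet {ν : Type} (E : ν → ν → Prop) (w : ν) : Set ν := {v | E v w}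

/-- The set of nodes that are neither descendants nor parents of `w`. -/
def nonDescSet {ν : Type} (E : ν → ν → Prop) (w : ν) : Set ν :=
  {v | ¬ Relation.ReflTransGen E w v ∧ ¬ E v w}

/-- The collection of random variables `(X v)_v` satisfies the Bayesian network structure
with edge relation `E`: each variable is conditionally independent of its
non-descendant non-parent variables given its parent variables. -/
def SatisfiesBN {Ω ν : Type} {β : ν → Type} (μ : PMF Ω) (X : ∀ v, Ω → β v)
    (E : ν → ν → Prop) : Prop :=
  ∀ w : ν, CondIndep μ (X w)
    (fun ω => fun v : nonDescSet E w => X v.1 ω)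
    (fun ω => fun v : parentSet E w => X v.1 ω)

/-- `E` is (the edge list of) a directed acyclic graph on the nodes `{0, …, n-1}`. -/
def IsDAG (n : ℕ) (E : List (ℕ × ℕ)) : Prop :=
  (∀ e ∈ E, e.1 < n ∧ e.2 < n) ∧
    ∀ i : ℕ, ¬ Relation.TransGen (fun a c => (a, c) ∈ E) i i

/-- The edge relation on `Fin n` determined by an edge list. -/
def edgeRelOn (n : ℕ) (E : List (ℕ × ℕ)) : Fin n → Fin n → Prop :=
  fun i j => ((i : ℕ), (j : ℕ)) ∈ E

/-- `(X_0, …, X_{n-1})` satisfies the Bayesian network given by the edge list `E`. -/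
def SatisfiesBNn {Ω : Type} (μ : PMF Ω) (n : ℕ) (X : ℕ → Ω → ℕ)
    (E : List (ℕ × ℕ)) : Prop :=
  SatisfiesBN μ (fun i : Fin n => X (i : ℕ)) (edgeRelOn n E)

/-- `(A, C, B) ∈ I(G_1, …, G_m)`: every collection of finitely supported discrete random
variables satisfying all the network structures in `Gs` satisfies `X_A ⊥⊥ X_B | X_C`. -/
def ImpliedCI (n : ℕ) (Gs : List (List (ℕ × ℕ))) (A C B : List ℕ) : Prop :=
  ∀ (Ω : Type) (μ : PMF Ω) (X : ℕ → Ω → ℕ),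
    (∀ i, i < n → FinSupp μ (X i)) →
    (∀ G ∈ Gs, SatisfiesBNn μ n X G) →
    CondIndep μ (jointOn X A) (jointOn X B) (jointOn X C)

/-- Two lists are disjoint as sets. -/
def DisjointL (A B : List ℕ) : Prop := ∀ a ∈ A, a ∉ B

end Paper

/-!
Let `m` be the largest mass of `Y`. Majorization at singletons bounds every mass of `X` by `m`.
Since `X = f (Y, Z)` is independent of `Z`, `P(Y = y, Z = z) ≤ P(X = f (y, z)) P(Z = z) ≤ m P(Z = z)`;
summing over `z` forces equality when `P(Y = y) = m`, so such an event `Y = y` is independent of `Z`.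
Independence of `X` and `Y` then realises every atom `x` of `X` as some `f (y, z)` with
`P(Y = y) = m`, whence `P(X = x) = m`: `X` is uniform on `ℓ = 1/m` points. Majorization at the
support of `X` says that at most `ℓ` masses of `Y`, each at most `1/ℓ`, sum to `1`, so `Y` is
uniform on `ℓ` points as well. Now every value of `Y` has mass `m`, which gives `Y ⊥⊥ Z`, and two
values `y ≠ y'` with `f (y, z) = f (y', z)` would give that common value of `X` a mass of `2m`.
-/
namespace Paper

open Finset
open scoped ENNReal

section ENNRealSums
variable {ι : Type*} {f g : ι → ℝ≥0∞}

lemma eq_of_le_of_tsum_le (hg : ∑' i, g i ≠ ∞) (hle : ∀ i, f i ≤ g i)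
    (hsum : ∑' i, g i ≤ ∑' i, f i) (i : ι) : f i = g i :=
  (hle i).eq_of_not_lt fun hlt =>
    (ENNReal.tsum_lt_tsum (ne_top_of_le_ne_top hg (ENNReal.tsum_le_tsum hle)) hle hlt).not_ge hsum

lemma eq_of_le_of_sum_le {s : Finset ι} (hg : ∑ i ∈ s, g i ≠ ∞) (hle : ∀ i ∈ s, f i ≤ g i)
    (hsum : ∑ i ∈ s, g i ≤ ∑ i ∈ s, f i) {i : ι} (hi : i ∈ s) : f i = g i := by
  simp only [← Finset.tsum_subtype] at hg hsum
  exact eq_of_le_of_tsum_le (f := fun j : s => f j) hg (fun j => hle j j.2) hsum ⟨i, hi⟩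

lemma eq_inv_of_le_inv_of_one_le_sum (hf : ∑' i, f i = 1) {ℓ : ℕ}
    (hle : ∀ i, f i ≤ (ℓ : ℝ≥0∞)⁻¹) {t : Finset ι} (ht : #t ≤ ℓ)
    (hone : 1 ≤ ∑ i ∈ t, f i) {i : ι} (hi : f i ≠ 0) : f i = (ℓ : ℝ≥0∞)⁻¹ := by
  classical
  have hconst : ∑ _ ∈ t, (ℓ : ℝ≥0∞)⁻¹ ≤ 1 := by
    rw [sum_const, nsmul_eq_mul]
    calc (#t : ℝ≥0∞) * (ℓ : ℝ≥0∞)⁻¹ ≤ ℓ * (ℓ : ℝ≥0∞)⁻¹ := by gcongr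
      _ ≤ 1 := ENNReal.mul_inv_le_one _
  by_cases hit : i ∈ t
  · exact eq_of_le_of_sum_le (ne_top_of_le_ne_top ENNReal.one_ne_top hconst)
      (fun j _ => hle j) (hconst.trans hone) hit
  · refine absurd (le_antisymm ?_ zero_le) hi
    refine ENNReal.le_of_add_le_add_right ENNReal.one_ne_top ?_
    calc f i + 1 ≤ f i + ∑ j ∈ t, f j := by gcongr
      _ = ∑ j ∈ insert i t, f j := (sum_insert hit).symm
      _ ≤ 1 := (ENNReal.sum_le_tsum _).trans hf.le
      _ = 0 + 1 := (zero_add 1).symm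

end ENNRealSums

lemma Majorizes.le_of_forall_le {p q : ℕ → ℝ≥0∞} (h : Majorizes p q) {m : ℝ≥0∞}
    (hp : ∀ y, p y ≤ m) (x : ℕ) : q x ≤ m := by
  obtain ⟨t, ht, hle⟩ := h {x}
  rw [sum_singleton] at hle
  rw [card_singleton] at ht
  calc q x ≤ ∑ y ∈ t, p y := hle
    _ ≤ #t • m := sum_le_card_nsmul t p m fun y _ => hp y
    _ ≤ 1 • m := nsmul_le_nsmul_left zero_le ht
    _ = m := one_nsmul m

section Probability
variable {Ω α : Type} {μ : PMF Ω}

lemma pr_ne_zero_iff {E : Set Ω} : pr μ E ≠ 0 ↔ ∃ ω ∈ μ.support, ω ∈ E := by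
  rw [Ne, pr, PMF.toOuterMeasure_apply_eq_zero_iff, Set.not_disjoint_iff]

lemma pr_ne_top (μ : PMF Ω) (E : Set Ω) : pr μ E ≠ ∞ := by
  rw [pr, PMF.toOuterMeasure_apply]
  exact μ.tsum_coe_indicator_ne_top E

lemma pr_le_pr_of_ae_subset {E F : Set Ω} (h : ∀ ω ∈ μ.support, ω ∈ E → ω ∈ F) :
    pr μ E ≤ pr μ F := by
  simp only [pr, PMF.toOuterMeasure_apply]
  refine ENNReal.tsum_le_tsum fun ω => ?_
  by_cases hω : ω ∈ μ.support
  · by_cases hE : ω ∈ E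
    · rw [Set.indicator_of_mem hE, Set.indicator_of_mem (h ω hω hE)]
    · rw [Set.indicator_of_notMem hE]
      exact zero_le
  · have hμ : μ ω = 0 := (μ.apply_eq_zero_iff ω).2 hω
    rw [Set.indicator_apply_eq_zero.2 fun _ => hμ]
    exact zero_le

lemma pr_union {E F : Set Ω} (h : Disjoint E F) : pr μ (E ∪ F) = pr μ E + pr μ F := by
  simp only [pr, PMF.toOuterMeasure_apply, Set.indicator_union_of_disjoint h, ENNReal.tsum_add]

lemma pr_eq_tsum_fiber (E : Set Ω) (g : Ω → α) :
    pr μ E = ∑' a, pr μ {ω | ω ∈ E ∧ g ω = a} := by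
  classical
  simp only [pr, PMF.toOuterMeasure_apply]
  rw [ENNReal.tsum_comm]
  refine tsum_congr fun ω => ?_
  rw [tsum_eq_single (g ω) fun a ha => by simp [Ne.symm ha]]
  simp [Set.indicator_apply]

lemma tsum_distOf (X : Ω → α) : ∑' x, distOf μ X x = 1 := by
  simpa [pr, distOf, PMF.toOuterMeasure_apply] using (pr_eq_tsum_fiber (μ := μ) Set.univ X).symm

lemma FinSupp.distOf_ne_zero_iff {X : Ω → α} (hX : FinSupp μ X) {x : α} :
    distOf μ X x ≠ 0 ↔ x ∈ hX.toFinset := by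
  rw [distOf, pr_ne_zero_iff, hX.mem_toFinset]
  rfl

lemma FinSupp.sum_distOf {X : Ω → α} (hX : FinSupp μ X) :
    ∑ x ∈ hX.toFinset, distOf μ X x = 1 := by
  rw [← tsum_distOf X, tsum_eq_sum fun x hx => not_not.1 (mt hX.distOf_ne_zero_iff.1 hx)]

lemma FinSupp.uniformCard_of_distOf_eq {X : Ω → α} (hX : FinSupp μ X) {m : ℝ≥0∞}
    (h : ∀ x, distOf μ X x ≠ 0 → distOf μ X x = m) :
    m = (#hX.toFinset : ℝ≥0∞)⁻¹ ∧ UniformCard μ X #hX.toFinset := by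
  have hm : m = (#hX.toFinset : ℝ≥0∞)⁻¹ := by
    refine ENNReal.eq_inv_of_mul_eq_one_left ?_
    rw [mul_comm, ← nsmul_eq_mul, ← sum_const, ← hX.sum_distOf]
    exact sum_congr rfl fun x hx => (h x (hX.distOf_ne_zero_iff.2 hx)).symm
  refine ⟨hm, hX.toFinset, rfl, fun x hx => hm ▸ h x (hX.distOf_ne_zero_iff.2 hx), ?_⟩
  exact fun x hx => not_not.1 (mt hX.distOf_ne_zero_iff.1 hx)

end Probability

section FunctionalModel
variable {Ω α β γ : Type} {μ : PMF Ω} {X : Ω → α} {Y : Ω → β} {Z : Ω → γ} {f : β × γ → α}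

lemma pr_pair_le_distOf_mul (hXZ : Indep μ X Z) (hf : ∀ ω ∈ μ.support, X ω = f (Y ω, Z ω))
    (y : β) (z : γ) :
    pr μ {ω | Y ω = y ∧ Z ω = z} ≤ distOf μ X (f (y, z)) * distOf μ Z z := by
  rw [distOf, distOf, ← hXZ]
  exact pr_le_pr_of_ae_subset fun ω hω ⟨hy, hz⟩ => ⟨by rw [hf ω hω, hy, hz], hz⟩

lemma pr_pair_eq_mul_of_distOf_le (hXZ : Indep μ X Z)
    (hf : ∀ ω ∈ μ.support, X ω = f (Y ω, Z ω)) {y : β}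
    (ha : ∀ x, distOf μ X x ≤ distOf μ Y y) (z : γ) :
    pr μ {ω | Y ω = y ∧ Z ω = z} = distOf μ Y y * distOf μ Z z := by
  have htotal : ∑' z, distOf μ Y y * distOf μ Z z = distOf μ Y y := by
    rw [ENNReal.tsum_mul_left, tsum_distOf, mul_one]
  refine eq_of_le_of_tsum_le (by rw [htotal]; exact pr_ne_top μ _)
    (fun z => (pr_pair_le_distOf_mul hXZ hf y z).trans (by gcongr; exact ha _)) ?_ z
  rw [htotal, distOf, pr_eq_tsum_fiber _ Z]
  rfl

lemma distOf_eq_of_distOf_le (hXZ : Indep μ X Z) (hXY : Indep μ X Y)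
    (hf : ∀ ω ∈ μ.support, X ω = f (Y ω, Z ω)) {y : β}
    (ha : ∀ x, distOf μ X x ≤ distOf μ Y y) (hy : distOf μ Y y ≠ 0) {x : α}
    (hx : distOf μ X x ≠ 0) : distOf μ X x = distOf μ Y y := by
  obtain ⟨ω, hω, rfl, rfl⟩ : ∃ ω ∈ μ.support, X ω = x ∧ Y ω = y :=
    (pr_ne_zero_iff (E := {ω | X ω = x ∧ Y ω = y})).1 (by rw [hXY]; exact mul_ne_zero hx hy)
  have hz : distOf μ Z (Z ω) ≠ 0 := pr_ne_zero_iff.2 ⟨ω, hω, rfl⟩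
  have key := pr_pair_le_distOf_mul hXZ hf (Y ω) (Z ω)
  rw [pr_pair_eq_mul_of_distOf_le hXZ hf ha, ← hf ω hω] at key
  exact (ha _).antisymm ((ENNReal.mul_le_mul_iff_left hz (pr_ne_top μ _)).1 key)

lemma indep_of_distOf_le (hXZ : Indep μ X Z) (hf : ∀ ω ∈ μ.support, X ω = f (Y ω, Z ω))
    (h : ∀ y, distOf μ Y y ≠ 0 → ∀ x, distOf μ X x ≤ distOf μ Y y) : Indep μ Y Z := by
  intro y z
  by_cases hy : distOf μ Y y = 0
  · have hle : pr μ {ω | Y ω = y ∧ Z ω = z} ≤ distOf μ Y y :=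
      pr_le_pr_of_ae_subset fun _ _ hω => hω.1
    rw [hy, nonpos_iff_eq_zero] at hle
    rw [hle, show pr μ {ω | Y ω = y} = 0 from hy, zero_mul]
  · exact pr_pair_eq_mul_of_distOf_le hXZ hf (h y hy) z

lemma injOn_of_indep (hXZ : Indep μ X Z) (hYZ : Indep μ Y Z)
    (hf : ∀ ω ∈ μ.support, X ω = f (Y ω, Z ω)) {m : ℝ≥0∞} (hm : m ≠ 0)
    (ha : ∀ x, distOf μ X x ≤ m) (hb : ∀ y, distOf μ Y y ≠ 0 → distOf μ Y y = m) {z : γ}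
    (hz : distOf μ Z z ≠ 0) : Set.InjOn (fun y => f (y, z)) {y | distOf μ Y y ≠ 0} := by
  intro y hy y' hy' hfy
  by_contra hne
  have hdisj : Disjoint {ω | Y ω = y ∧ Z ω = z} {ω | Y ω = y' ∧ Z ω = z} :=
    Set.disjoint_left.2 fun ω h h' => hne (h.1.symm.trans h'.1)
  have hsub : distOf μ Y y * distOf μ Z z + distOf μ Y y' * distOf μ Z z
      ≤ distOf μ X (f (y, z)) * distOf μ Z z := by
    have hunion : pr μ ({ω | Y ω = y ∧ Z ω = z} ∪ {ω | Y ω = y' ∧ Z ω = z})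
        ≤ pr μ {ω | X ω = f (y, z) ∧ Z ω = z} := by
      refine pr_le_pr_of_ae_subset fun ω hω hω' => ?_
      rcases hω' with ⟨rfl, rfl⟩ | ⟨rfl, rfl⟩
      · exact ⟨hf ω hω, rfl⟩
      · exact ⟨(hf ω hω).trans hfy.symm, rfl⟩
    rwa [pr_union hdisj, hYZ, hYZ, hXZ] at hunion
  rw [hb y hy, hb y' hy'] at hsub
  have hmz : m * distOf μ Z z ≠ ∞ :=
    hb y hy ▸ ENNReal.mul_ne_top (pr_ne_top μ _) (pr_ne_top μ _)
  have htwice : m * distOf μ Z z + m * distOf μ Z z ≤ 0 + m * distOf μ Z z := by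
    rw [zero_add]
    exact hsub.trans (by gcongr; exact ha _)
  exact mul_ne_zero hm hz (nonpos_iff_eq_zero.1 (ENNReal.le_of_add_le_add_right hmz htwice))

lemma funDep_of_injOn [Nonempty β] (hf : ∀ ω ∈ μ.support, X ω = f (Y ω, Z ω))
    (hinj : ∀ z, distOf μ Z z ≠ 0 → Set.InjOn (fun y => f (y, z)) {y | distOf μ Y y ≠ 0}) :
    FunDep μ (fun ω => (X ω, Z ω)) Y := by
  refine ⟨fun p => Function.invFunOn (fun y => f (y, p.2)) {y | distOf μ Y y ≠ 0} p.1,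
    fun ω hω => ?_⟩
  have hY : distOf μ Y (Y ω) ≠ 0 := pr_ne_zero_iff.2 ⟨ω, hω, rfl⟩
  have hZ : distOf μ Z (Z ω) ≠ 0 := pr_ne_zero_iff.2 ⟨ω, hω, rfl⟩
  dsimp only
  rw [hf ω hω]
  exact ((hinj _ hZ).leftInvOn_invFunOn hY).symm

end FunctionalModel

theorem majorization_forces_uniform_general {Ω : Type} (μ : PMF Ω) (X Y Z : Ω → ℕ)
    (hX : FinSupp μ X) (hY : FinSupp μ Y)
    (hXZ : Indep μ X Z)
    (hfd : FunDep μ (fun ω => (Y ω, Z ω)) X)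
    (hXY : Indep μ X Y)
    (hmaj : Majorizes (distOf μ Y) (distOf μ X)) :
    (∃ ℓ : ℕ, 1 ≤ ℓ ∧ UniformCard μ X ℓ ∧ UniformCard μ Y ℓ) ∧
    Indep μ Y Z ∧
    FunDep μ (fun ω => (X ω, Z ω)) Y := by
  obtain ⟨f, hf⟩ := hfd
  obtain ⟨ω₀, hω₀⟩ := μ.support_nonempty
  obtain ⟨y₀, hy₀, hmax⟩ :=
    hY.toFinset.exists_max_image (distOf μ Y) ⟨Y ω₀, hY.mem_toFinset.2 ⟨ω₀, hω₀, rfl⟩⟩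
  set m := distOf μ Y y₀
  have hm : m ≠ 0 := hY.distOf_ne_zero_iff.2 hy₀
  have hb_le : ∀ y, distOf μ Y y ≤ m := fun y =>
    if h : distOf μ Y y = 0 then h ▸ zero_le else hmax y (hY.distOf_ne_zero_iff.1 h)
  have ha_le : ∀ x, distOf μ X x ≤ m := hmaj.le_of_forall_le hb_le
  have ha_eq : ∀ x, distOf μ X x ≠ 0 → distOf μ X x = m := fun x =>
    distOf_eq_of_distOf_le hXZ hXY hf ha_le hm
  obtain ⟨hmX, hXunif⟩ := hX.uniformCard_of_distOf_eq ha_eq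
  obtain ⟨t, ht, hone⟩ := hmaj hX.toFinset
  rw [hX.sum_distOf] at hone
  have hb_eq : ∀ y, distOf μ Y y ≠ 0 → distOf μ Y y = m := fun y hy =>
    hmX ▸ eq_inv_of_le_inv_of_one_le_sum (tsum_distOf Y) (hmX ▸ hb_le) ht hone hy
  obtain ⟨hmY, hYunif⟩ := hY.uniformCard_of_distOf_eq hb_eq
  have hcard : #hY.toFinset = #hX.toFinset := by exact_mod_cast inv_inj.1 (hmY.symm.trans hmX)
  have hYZ : Indep μ Y Z :=
    indep_of_distOf_le hXZ hf fun y hy x => (hb_eq y hy).symm ▸ ha_le x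
  refine ⟨⟨_, card_pos.2 ⟨X ω₀, hX.mem_toFinset.2 ⟨ω₀, hω₀, rfl⟩⟩, hXunif, hcard ▸ hYunif⟩,
    hYZ, funDep_of_injOn hf fun z hz => injOn_of_indep hXZ hYZ hf hm ha_le hb_eq hz⟩

/-- Second part of Lemma 4 of the paper: if `X ⊥⊥ Z`, `X ≤ι (Y, Z)`, `X ⊥⊥ Y` and
`p_Y ⪰ p_X`, then `X` and `Y` are uniformly distributed with the same cardinality,
`Y ⊥⊥ Z` and `Y ≤ι (X, Z)`. -/
theorem majorization_forces_uniform {Ω : Type} (μ : PMF Ω) (X Y Z : Ω → ℕ)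
    (hX : FinSupp μ X) (hY : FinSupp μ Y) (hZ : FinSupp μ Z)
    (hXZ : Indep μ X Z)
    (hfd : FunDep μ (fun ω => (Y ω, Z ω)) X)
    (hXY : Indep μ X Y)
    (hmaj : Majorizes (distOf μ Y) (distOf μ X)) :
    (∃ ℓ : ℕ, 1 ≤ ℓ ∧ UniformCard μ X ℓ ∧ UniformCard μ Y ℓ) ∧
    Indep μ Y Z ∧
    FunDep μ (fun ω => (X ω, Z ω)) Y :=
  majorization_forces_uniform_general μ X Y Z hX hY hXZ hfd hXY hmaj

end Paper
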